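/- arXiv:1707.04618 — 4 statements merged into one kernel-verified Lean document; each statement's English description precedes it below -/
import Mathlib

section
/- (Loomis–Whitney inequality in three dimensions) For any finite set V ⊆ ℕ³, |V| ≤ (|π₁₂(V)| · |π₁₃(V)| · |π₂₃(V)|)^{1/2}, where π_{ij} projects a triple onto its coordinates i and j. Equivalently, |V|² ≤ |π₁₂(V)| · |π₁₃(V)| · |π₂₃(V)|. -/
/-!
Group the points of `V` by their projection to the first two coordinates. By Cauchy–Schwarz,
`|V|²` is at most `|π₁₂(V)|` times the number of pairs of points of `V` lying over the same
point of `π₁₂(V)`. Such a pair `((a, b, c), (a, b, c'))` is determined by `((a, c), (b, c'))`,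
which lies in `π₁₃(V) × π₂₃(V)`.
-/

open Finset

namespace Finset

variable {ι κ : Type*} [DecidableEq κ]

theorem sum_sq_card_fiber_eq_card_filter_eq {s : Finset ι} {t : Finset κ} {f : ι → κ}
    (hf : Set.MapsTo f s t) :
    ∑ k ∈ t, #{i ∈ s | f i = k} ^ 2 = #{x ∈ s ×ˢ s | f x.1 = f x.2} := by
  rw [card_eq_sum_card_fiberwise (f := fun x => f x.1)
    fun x hx => hf (mem_product.1 (mem_filter.1 hx).1).1]
  refine sum_congr rfl fun k _ => ?_
  rw [sq, ← card_product]
  congr 1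
  ext ⟨i, j⟩
  simp only [mem_filter, mem_product]
  constructor
  · rintro ⟨⟨hi, rfl⟩, hj, hji⟩
    exact ⟨⟨⟨hi, hj⟩, hji.symm⟩, rfl⟩
  · rintro ⟨⟨⟨hi, hj⟩, hij⟩, rfl⟩
    exact ⟨⟨hi, rfl⟩, hj, hij.symm⟩

theorem card_sq_le_card_mul_card_filter_eq {s : Finset ι} {t : Finset κ} {f : ι → κ}
    (hf : Set.MapsTo f s t) :
    #s ^ 2 ≤ #t * #{x ∈ s ×ˢ s | f x.1 = f x.2} :=
  calc #s ^ 2 = (∑ k ∈ t, #{i ∈ s | f i = k}) ^ 2 := by rw [card_eq_sum_card_fiberwise hf]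
    _ ≤ #t * ∑ k ∈ t, #{i ∈ s | f i = k} ^ 2 := sq_sum_le_card_mul_sum_sq
    _ = #t * #{x ∈ s ×ˢ s | f x.1 = f x.2} := by rw [sum_sq_card_fiber_eq_card_filter_eq hf]

end Finset

section

variable {α β γ : Type*} [DecidableEq α] [DecidableEq β] [DecidableEq γ]

theorem card_filter_eq_first_two_le_card_image_mul_card_image (V : Finset (α × β × γ)) :
    #{x ∈ V ×ˢ V | (x.1.1, x.1.2.1) = (x.2.1, x.2.2.1)} ≤
      #(V.image fun p => (p.1, p.2.2)) * #(V.image fun p => (p.2.1, p.2.2)) := by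
  rw [← card_product]
  refine card_le_card_of_injOn (fun x => ((x.1.1, x.1.2.2), x.2.2)) ?_ ?_
  · rintro ⟨p, q⟩ hpq
    simp only [coe_filter, mem_product, Set.mem_ofPred_eq] at hpq
    exact mem_product.2 ⟨mem_image_of_mem _ hpq.1.1, mem_image_of_mem _ hpq.1.2⟩
  · rintro ⟨⟨a, b, c⟩, ⟨a₁, b₁, c₁⟩⟩ hx ⟨⟨a', b', c'⟩, ⟨a₁', b₁', c₁'⟩⟩ hy hxy
    simp only [coe_filter, Set.mem_ofPred_eq, Prod.mk.injEq] at hx hy hxy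
    obtain ⟨-, rfl, rfl⟩ := hx
    obtain ⟨-, rfl, rfl⟩ := hy
    obtain ⟨⟨rfl, rfl⟩, rfl, rfl⟩ := hxy
    rfl

end

/-- Loomis–Whitney inequality in three dimensions:
|V|² ≤ |π₁₂(V)| · |π₁₃(V)| · |π₂₃(V)|. -/
theorem loomis_whitney_3d (V : Finset (ℕ × ℕ × ℕ)) :
    V.card ^ 2 ≤
      (V.image fun p => (p.1, p.2.1)).card *
      (V.image fun p => (p.1, p.2.2)).card *
      (V.image fun p => (p.2.1, p.2.2)).card := by
  rw [mul_assoc]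
  calc #V ^ 2 ≤ #(V.image fun p => (p.1, p.2.1)) *
        #{x ∈ V ×ˢ V | (x.1.1, x.1.2.1) = (x.2.1, x.2.2.1)} :=
      card_sq_le_card_mul_card_filter_eq fun p hp => mem_image_of_mem _ hp
    _ ≤ _ := Nat.mul_le_mul_left _ (card_filter_eq_first_two_le_card_image_mul_card_image V)
end

section
/- For any finite set V of m-tuples of natural numbers and 1 ≤ r ≤ m, if L is the union over all strictly increasing index subsets s of size r of the projections of V onto the coordinates in s (with coordinates kept in their original order), then |V| ≤ |L|^{m/r}. Equivalently, |V|^r ≤ |L|^m. -/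
/-!
Discrete Loomis–Whitney: slice `W ⊆ α^(n+2)` along the last coordinate. Each slice `S_a` has
`|S_a| ≤ |π_last W|` and, by induction, `|S_a|^n ≤ ∏ᵢ |πᵢ S_a|`; Hölder's inequality over `a`
with all exponents `1/(n+1)`, together with `∑ₐ |πᵢ S_a| = |π_(castSucc i) W|`, gives
`|W|^(n+1) ≤ ∏ⱼ |πⱼ W|`.

The theorem then follows by induction on the number `k ≥ r` of coordinates: if every
`r`-coordinate projection of `W ⊆ α^(k+1)` has at most `B` points, the same holds for each face
`πᵢ W`, so `|πᵢ W|^r ≤ B^k`, and Loomis–Whitney gives `|W|^(rk) ≤ B^((k+1)k)`.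
-/

open Finset MeasureTheory
open scoped ENNReal

theorem ENNReal.sum_prod_rpow_le_prod_sum_rpow {ι κ : Type*} (s : Finset ι) (t : Finset κ)
    (f : ι → κ → ℝ≥0∞) {p : ι → ℝ} (hp : ∑ i ∈ s, p i = 1) (hp0 : ∀ i ∈ s, 0 ≤ p i) :
    ∑ k ∈ t, ∏ i ∈ s, f i k ^ p i ≤ ∏ i ∈ s, (∑ k ∈ t, f i k) ^ p i := by
  let _ : MeasurableSpace t := ⊤
  have sum_eq_lintegral (g : κ → ℝ≥0∞) : ∑ k ∈ t, g k = ∫⁻ k : t, g k ∂Measure.count := by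
    rw [lintegral_count, tsum_fintype, sum_coe_sort]
  simp only [sum_eq_lintegral]
  exact lintegral_prod_norm_pow_le s (fun i _ => (measurable_of_countable _).aemeasurable) hp hp0

section
variable {α : Type*} [DecidableEq α] {n : ℕ}

def lastSlice (W : Finset (Fin (n + 1) → α)) (a : α) : Finset (Fin n → α) :=
  (W.filter (· (Fin.last n) = a)).image (· ∘ Fin.castSucc)

theorem card_lastSlice (W : Finset (Fin (n + 1) → α)) (a : α) :
    (lastSlice W a).card = (W.filter (· (Fin.last n) = a)).card := by
  refine card_image_of_injOn fun w hw w' hw' h => funext fun j => ?_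
  induction j using Fin.lastCases with
  | last => rw [(mem_filter.1 hw).2, (mem_filter.1 hw').2]
  | cast j => exact congrFun h j

theorem card_eq_sum_card_lastSlice (W : Finset (Fin (n + 1) → α)) {T : Finset α}
    (hT : ∀ w ∈ W, w (Fin.last n) ∈ T) : W.card = ∑ a ∈ T, (lastSlice W a).card := by
  simp only [card_lastSlice]
  exact card_eq_sum_card_fiberwise hT

theorem lastSlice_subset (W : Finset (Fin (n + 1) → α)) (a : α) :
    lastSlice W a ⊆ W.image (· ∘ (Fin.last n).succAbove) := by
  rw [Fin.succAbove_last]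
  exact image_subset_image (filter_subset _ _)

theorem image_lastSlice (W : Finset (Fin (n + 2) → α)) (a : α) (i : Fin (n + 1)) :
    (lastSlice W a).image (· ∘ i.succAbove) =
      lastSlice (W.image (· ∘ i.castSucc.succAbove)) a := by
  have hlast : i.castSucc.succAbove (Fin.last n) = Fin.last (n + 1) := by
    rw [Fin.succAbove_castSucc_of_le i _ (Fin.le_last i), Fin.succ_last]
  simp only [lastSlice, filter_image, image_image]
  congr 1
  · exact funext fun w => funext fun j => congrArg w Fin.castSucc_succAbove_castSucc.symm
  · exact filter_congr fun w _ => by rw [Function.comp_apply, hlast]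

theorem card_pow_le_prod_card_image_succAbove :
    ∀ {n : ℕ} (W : Finset (Fin (n + 1) → α)), W.Nonempty →
      W.card ^ n ≤ ∏ i : Fin (n + 1), (W.image (· ∘ i.succAbove)).card
  | 0, W, hW => by
    rw [pow_zero, Nat.one_le_iff_ne_zero, prod_ne_zero_iff]
    exact fun i _ => (hW.image _).card_pos.ne'
  | n + 1, W, _ => by
    set P : Fin (n + 2) → ℕ := fun j => (W.image (· ∘ j.succAbove)).card
    set d : Fin (n + 1) → α → ℕ := fun i a => ((lastSlice W a).image (· ∘ i.succAbove)).card
    set q : ℝ := ((n + 1 : ℕ) : ℝ)⁻¹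
    have hq : 0 ≤ q := by positivity
    have slice_le (a : α) : (lastSlice W a).card ^ (n + 1) ≤ P (Fin.last _) * ∏ i, d i a := by
      rcases (lastSlice W a).eq_empty_or_nonempty with h | h
      · simp [h]
      · rw [pow_succ']
        exact Nat.mul_le_mul (card_le_card (lastSlice_subset W a))
          (card_pow_le_prod_card_image_succAbove _ h)
    set T := W.image (· (Fin.last (n + 1)))
    have sum_d (i : Fin (n + 1)) : ∑ a ∈ T, d i a = P i.castSucc := by
      simp only [d, image_lastSlice]
      refine (card_eq_sum_card_lastSlice _ fun u hu => ?_).symm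
      obtain ⟨w, hw, rfl⟩ := mem_image.1 hu
      rw [Function.comp_apply, Fin.succAbove_castSucc_of_le i _ (Fin.le_last i), Fin.succ_last]
      exact mem_image_of_mem _ hw
    have card_le_rpow : (W.card : ℝ≥0∞) ≤ (∏ j, (P j : ℝ≥0∞)) ^ q := calc
      (W.card : ℝ≥0∞) = ∑ a ∈ T, ((lastSlice W a).card : ℝ≥0∞) := by
        exact_mod_cast card_eq_sum_card_lastSlice W fun w hw => mem_image_of_mem _ hw
      _ ≤ ∑ a ∈ T, ((P (Fin.last _) : ℝ≥0∞) * ∏ i, (d i a : ℝ≥0∞)) ^ q := by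
        refine sum_le_sum fun a _ => (ENNReal.le_rpow_inv_iff (by positivity)).2 ?_
        rw [ENNReal.rpow_natCast]
        exact_mod_cast slice_le a
      _ = (P (Fin.last _) : ℝ≥0∞) ^ q * ∑ a ∈ T, ∏ i, (d i a : ℝ≥0∞) ^ q := by
        simp only [ENNReal.mul_rpow_of_nonneg _ _ hq, ENNReal.prod_rpow_of_nonneg hq, mul_sum]
      _ ≤ (P (Fin.last _) : ℝ≥0∞) ^ q * ∏ i, (∑ a ∈ T, (d i a : ℝ≥0∞)) ^ q := by
        gcongr
        refine ENNReal.sum_prod_rpow_le_prod_sum_rpow _ _ _ ?_ fun _ _ => hq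
        simp only [q, sum_const, card_univ, Fintype.card_fin, nsmul_eq_mul]
        exact mul_inv_cancel₀ (by positivity)
      _ = (∏ j, (P j : ℝ≥0∞)) ^ q := by
        simp only [← Nat.cast_sum, sum_d, Fin.prod_univ_castSucc (n := n + 1),
          ENNReal.mul_rpow_of_nonneg _ _ hq, ENNReal.prod_rpow_of_nonneg hq, mul_comm]
    rw [ENNReal.le_rpow_inv_iff (by positivity), ENNReal.rpow_natCast] at card_le_rpow
    exact_mod_cast card_le_rpow

theorem card_pow_le_pow_of_card_image_le {r k : ℕ} (hr : 1 ≤ r) (hrk : r ≤ k)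
    {W : Finset (Fin k → α)} {B : ℕ}
    (hB : ∀ s : Fin r → Fin k, StrictMono s → (W.image (· ∘ s)).card ≤ B) :
    W.card ^ r ≤ B ^ k := by
  induction k, hrk using Nat.le_induction with
  | base => simpa using Nat.pow_le_pow_left (hB id strictMono_id) r
  | succ k hrk ih =>
    rcases W.eq_empty_or_nonempty with rfl | hW
    · simp [Nat.zero_pow hr]
    have face_le (i : Fin (k + 1)) : (W.image (· ∘ i.succAbove)).card ^ r ≤ B ^ k :=
      ih fun s hs => by
        rw [image_image]
        exact hB (i.succAbove ∘ s) ((Fin.strictMono_succAbove i).comp hs)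
    have pow_pow_le : (W.card ^ r) ^ k ≤ (B ^ (k + 1)) ^ k := calc
      (W.card ^ r) ^ k = (W.card ^ k) ^ r := by rw [← pow_mul, ← pow_mul, mul_comm]
      _ ≤ (∏ i : Fin (k + 1), (W.image (· ∘ i.succAbove)).card) ^ r :=
        Nat.pow_le_pow_left (card_pow_le_prod_card_image_succAbove W hW) r
      _ ≤ ∏ _i : Fin (k + 1), B ^ k := by
        rw [← prod_pow]
        exact prod_le_prod' fun i _ => face_le i
      _ = (B ^ (k + 1)) ^ k := by
        rw [prod_const, card_univ, Fintype.card_fin, ← pow_mul, ← pow_mul, mul_comm]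
    exact (Nat.pow_le_pow_iff_left (by omega)).1 pow_pow_le

end

/-- Generalized Loomis–Whitney projection bound: for a finite set V of m-tuples
and L the union over all strictly increasing index subsets of size r of the
corresponding projections of V, we have |V|^r ≤ |L|^m. -/
theorem generalized_loomis_whitney (m r : ℕ) (hr : 1 ≤ r) (hrm : r ≤ m)
    (V : Finset (Fin m → ℕ)) :
    V.card ^ r ≤
      (Set.ncard {w : Fin r → ℕ |
        ∃ v ∈ V, ∃ s : Fin r → Fin m, StrictMono s ∧ w = v ∘ s}) ^ m := by
  set L := {w : Fin r → ℕ | ∃ v ∈ V, ∃ s : Fin r → Fin m, StrictMono s ∧ w = v ∘ s}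
  have hL : L.Finite :=
    (Set.finite_range fun p : V × (Fin r → Fin m) => (p.1 : Fin m → ℕ) ∘ p.2).subset
      fun _ ⟨v, hv, s, _, hw⟩ => ⟨(⟨v, hv⟩, s), hw.symm⟩
  refine card_pow_le_pow_of_card_image_le hr hrm fun s hs => ?_
  rw [← Set.ncard_coe_finset]
  refine Set.ncard_le_ncard (fun w hw => ?_) hL
  obtain ⟨v, hv, rfl⟩ := mem_image.1 (mem_coe.1 hw)
  exact ⟨v, hv, s, hs, rfl⟩
end

section
/- If every column of a matrix R over a field has at most c nonzero entries (c ≥ 1), and the columns of R collectively have nonzeros in L distinct rows, then rank(R) ≥ L / c. More precisely, there is a subset of at least ⌈L/c⌉ columns which are linearly independent. -/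
/-!
Choose a set `S` of columns of `R` forming a basis of its column space, so `|S| = rank R`.
If row `i` meets a nonzero entry of some column, that column is a combination of the columns
in `S`, so some column in `S` is nonzero at `i`. Hence the nonzero rows are covered by the
supports of the `|S|` columns in `S`, each of size at most `c`.
-/

open Submodule

theorem Submodule.exists_mem_apply_ne_zero_of_mem_span {R M N : Type*} [Semiring R]
    [AddCommMonoid M] [Module R M] [AddCommMonoid N] [Module R N] (f : M →ₗ[R] N)
    {s : Set M} {x : M} (hx : x ∈ span R s) (hfx : f x ≠ 0) : ∃ y ∈ s, f y ≠ 0 := by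
  by_contra! hs
  exact hfx <| span_le.2 (fun y hy => LinearMap.mem_ker.2 (hs y hy)) hx

theorem exists_finset_linearIndepOn_span_image_eq {K V ι : Type*} [DivisionRing K]
    [AddCommGroup V] [Module K V] [Finite ι] (v : ι → V) :
    ∃ S : Finset ι, LinearIndepOn K v S ∧ span K (v '' S) = span K (Set.range v) := by
  obtain ⟨b, -, -, hspan, hli⟩ :=
    exists_linearIndepOn_extension (linearIndepOn_empty K v) (Set.empty_subset Set.univ)
  refine ⟨b.toFinite.toFinset, by simpa using hli, ?_⟩
  rw [Set.Finite.coe_toFinset, ← Set.image_univ]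
  exact le_antisymm (span_mono (Set.image_mono (Set.subset_univ b))) (span_le.2 hspan)

namespace Matrix

variable {m n K : Type*}

theorem rank_eq_card_of_linearIndepOn_col [Field K] [Fintype m] [Fintype n]
    {A : Matrix m n K} {S : Finset n}
    (hli : LinearIndepOn K A.col S) (hspan : span K (A.col '' S) = span K (Set.range A.col)) :
    A.rank = S.card := by
  rw [rank_eq_finrank_span_cols, ← hspan, Set.image_eq_range, finrank_span_eq_card hli]
  simp

theorem setOf_exists_ne_zero_subset_biUnion [Semiring K] {A : Matrix m n K} {S : Finset n}
    (hspan : span K (A.col '' S) = span K (Set.range A.col)) :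
    {i | ∃ j, A i j ≠ 0} ⊆ ⋃ j ∈ S, {i | A i j ≠ 0} := by
  rintro i ⟨j, hij⟩
  have hj : A.col j ∈ span K (A.col '' S) := hspan ▸ subset_span ⟨j, rfl⟩
  obtain ⟨_, ⟨j', hj', rfl⟩, hj'i⟩ :=
    exists_mem_apply_ne_zero_of_mem_span (LinearMap.proj i) hj hij
  exact Set.mem_biUnion hj' hj'i

end Matrix

theorem Nat.add_sub_one_div_le_of_le_mul {a b c : ℕ} (h : a ≤ b * c) :
    (a + b - 1) / b ≤ c := by
  rcases b.eq_zero_or_pos with rfl | hb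
  · simp
  · rw [← Nat.ceilDiv_eq_add_pred_div, ceilDiv_le_iff_le_mul hb]
    exact h

theorem rank_lower_bound_sparse_columns_general {F : Type*} [Field F] (n m c : ℕ)
    (R : Matrix (Fin n) (Fin m) F)
    (h : ∀ j, Set.ncard {i : Fin n | R i j ≠ 0} ≤ c) :
    Set.ncard {i : Fin n | ∃ j, R i j ≠ 0} ≤ c * R.rank ∧
    ∃ S : Finset (Fin m),
      (Set.ncard {i : Fin n | ∃ j, R i j ≠ 0} + c - 1) / c ≤ S.card ∧
      LinearIndependent F (fun j : S => fun i : Fin n => R i (j : Fin m)) := by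
  obtain ⟨S, hli, hspan⟩ := exists_finset_linearIndepOn_span_image_eq (K := F) R.col
  have hL : Set.ncard {i : Fin n | ∃ j, R i j ≠ 0} ≤ c * S.card :=
    calc Set.ncard {i : Fin n | ∃ j, R i j ≠ 0}
        ≤ Set.ncard (⋃ j ∈ S, {i : Fin n | R i j ≠ 0}) :=
          Set.ncard_le_ncard (Matrix.setOf_exists_ne_zero_subset_biUnion hspan)
      _ ≤ ∑ j ∈ S, Set.ncard {i : Fin n | R i j ≠ 0} := S.set_ncard_biUnion_le _
      _ ≤ c * S.card := by
          rw [mul_comm]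
          exact Finset.sum_le_card_nsmul S _ c fun j _ => h j
  exact ⟨Matrix.rank_eq_card_of_linearIndepOn_col hli hspan ▸ hL, S,
    Nat.add_sub_one_div_le_of_le_mul hL, hli⟩

/-- If every column of R has at most c nonzero entries (c ≥ 1) and the columns
collectively have nonzeros in L distinct rows, then rank(R) ≥ L / c; more
precisely, there is a subset of at least ⌈L/c⌉ columns that are linearly
independent. -/
theorem rank_lower_bound_sparse_columns {F : Type*} [Field F] (n m c : ℕ)
    (hc : 1 ≤ c) (R : Matrix (Fin n) (Fin m) F)
    (h : ∀ j, Set.ncard {i : Fin n | R i j ≠ 0} ≤ c) :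
    Set.ncard {i : Fin n | ∃ j, R i j ≠ 0} ≤ c * R.rank ∧
    ∃ S : Finset (Fin m),
      (Set.ncard {i : Fin n | ∃ j, R i j ≠ 0} + c - 1) / c ≤ S.card ∧
      LinearIndependent F (fun j : S => fun i : Fin n => R i (j : Fin m)) :=
  rank_lower_bound_sparse_columns_general n m c R h
end

section
/- (Expansion bound for the direct evaluation symmetric contraction algorithm) Let V be a subset of the product index set of nondecreasing tuples (j ∈ I_s, l ∈ I_t, k ∈ I_v) where I_d denotes nondecreasing d-tuples from {1,...,n}. Let d_A be the number of distinct nondecreasing (s+v)-tuples obtainable by merging (sorting the concatenation of) some (j,k) with (j,l,k) ∈ V; similarly d_B for (k,l) merged into (v+t)-tuples and d_C for (j,l) merged into (s+t)-tuples. Then |V| ≤ [C(s+v,s)·C(v+t,v)·C(s+t,s)]^{1/2} · (d_A · d_B · d_C)^{1/2}. -/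
/-!
A monotone tuple is determined by its multiset of values, so a multiset of size `s + v` is the
merge of at most `C(s+v, s)` pairs of monotone tuples, one for each of its sub-multisets of
size `s`. Hence the projection of `V` to the coordinates `(j, k)` has at most `C(s+v, s) · d_A`
elements, and similarly for `(k, l)` and `(j, l)`. The discrete Loomis–Whitney inequality
`|V|² ≤ |π_{jk} V| · |π_{kl} V| · |π_{jl} V|` then gives the bound.
-/

/-- The multiset of values of a tuple. -/
def tupleMultiset {d n : ℕ} (f : Fin d → Fin n) : Multiset (Fin n) :=
  Multiset.map f Finset.univ.val

open Finset

theorem tupleMultiset_eq_coe_ofFn {d n : ℕ} (f : Fin d → Fin n) :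
    tupleMultiset f = ↑(List.ofFn f) := by
  simp [tupleMultiset, List.ofFn_eq_map, Fin.univ_def]

theorem card_tupleMultiset {d n : ℕ} (f : Fin d → Fin n) :
    Multiset.card (tupleMultiset f) = d := by
  simp [tupleMultiset_eq_coe_ofFn]

theorem Monotone.eq_of_tupleMultiset_eq {d n : ℕ} {f g : Fin d → Fin n}
    (hf : Monotone f) (hg : Monotone g) (h : tupleMultiset f = tupleMultiset g) : f = g := by
  rw [tupleMultiset_eq_coe_ofFn, tupleMultiset_eq_coe_ofFn] at h
  exact List.ofFn_injective <| List.Perm.eq_of_sortedLE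
    (List.sortedLE_ofFn_iff.2 hf) (List.sortedLE_ofFn_iff.2 hg) (Quotient.exact h)

section Merge

variable {s v n : ℕ}

theorem card_filter_merge_eq_le_choose (W : Finset ((Fin s → Fin n) × (Fin v → Fin n)))
    (hW : ∀ x ∈ W, Monotone x.1 ∧ Monotone x.2) (m : Multiset (Fin n)) :
    #{x ∈ W | tupleMultiset x.1 + tupleMultiset x.2 = m} ≤ (Multiset.card m).choose s := by
  set F := {x ∈ W | tupleMultiset x.1 + tupleMultiset x.2 = m}
  have maps_to : ∀ x ∈ F, tupleMultiset x.1 ∈ (Multiset.powersetCard s m).toFinset := by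
    intro x hx
    obtain ⟨-, rfl⟩ := mem_filter.1 hx
    rw [Multiset.mem_toFinset, Multiset.mem_powersetCard]
    exact ⟨Multiset.le_add_right _ _, card_tupleMultiset x.1⟩
  have inj_on : Set.InjOn (fun x : (Fin s → Fin n) × (Fin v → Fin n) => tupleMultiset x.1) F := by
    intro x hx y hy (hxy : tupleMultiset x.1 = tupleMultiset y.1)
    obtain ⟨hxW, hxm⟩ := mem_filter.1 hx
    obtain ⟨hyW, hym⟩ := mem_filter.1 hy
    have h₂ : tupleMultiset x.2 = tupleMultiset y.2 :=
      add_left_cancel (a := tupleMultiset x.1) (by rw [hxm, hxy, hym])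
    exact Prod.ext ((hW x hxW).1.eq_of_tupleMultiset_eq (hW y hyW).1 hxy)
      ((hW x hxW).2.eq_of_tupleMultiset_eq (hW y hyW).2 h₂)
  calc _ ≤ #(Multiset.powersetCard s m).toFinset := card_le_card_of_injOn _ maps_to inj_on
    _ ≤ Multiset.card (Multiset.powersetCard s m) := Multiset.toFinset_card_le _
    _ = _ := Multiset.card_powersetCard s m

theorem card_image_le_choose_mul_card_image_merge {ι : Type*} (V : Finset ι)
    (f : ι → Fin s → Fin n) (g : ι → Fin v → Fin n)
    (hf : ∀ x ∈ V, Monotone (f x)) (hg : ∀ x ∈ V, Monotone (g x)) :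
    #(V.image fun x => (f x, g x)) ≤
      (s + v).choose s * #(V.image fun x => tupleMultiset (f x) + tupleMultiset (g x)) := by
  have hW : ∀ y ∈ V.image fun x => (f x, g x), Monotone y.1 ∧ Monotone y.2 := by
    simp only [mem_image, forall_exists_index, and_imp]
    rintro _ x hx rfl
    exact ⟨hf x hx, hg x hx⟩
  have := card_le_mul_card_image (V.image fun x => (f x, g x))
    (f := fun y => tupleMultiset y.1 + tupleMultiset y.2) ((s + v).choose s) fun m hm => by
      obtain ⟨y, -, rfl⟩ := mem_image.1 hm
      simpa [card_tupleMultiset] using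
        card_filter_merge_eq_le_choose _ hW (tupleMultiset y.1 + tupleMultiset y.2)
  rwa [image_image] at this

end Merge

section LoomisWhitney

theorem sum_card_filter_sq_eq_card_filter_product {ι κ : Type*} [DecidableEq ι] [DecidableEq κ]
    (S : Finset ι) (f : ι → κ) :
    ∑ p ∈ S.image f, #{x ∈ S | f x = p} ^ 2 = #{z ∈ S ×ˢ S | f z.1 = f z.2} := by
  rw [card_eq_sum_card_fiberwise (f := fun z => f z.1) (t := S.image f)]
  · refine sum_congr rfl fun p _ => ?_
    rw [sq, ← card_product]
    congr 1
    ext z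
    simp only [mem_product, mem_filter]
    constructor
    · rintro ⟨⟨h₁, h₂⟩, h₃, h₄⟩; exact ⟨⟨⟨h₁, h₃⟩, h₂.trans h₄.symm⟩, h₂⟩
    · rintro ⟨⟨⟨h₁, h₃⟩, h⟩, h₂⟩; exact ⟨⟨h₁, h₂⟩, h₃, h.symm.trans h₂⟩
  · intro z hz
    exact mem_image_of_mem f (mem_product.1 (mem_filter.1 hz).1).1

variable {α β γ : Type*} [DecidableEq α] [DecidableEq β] [DecidableEq γ]

theorem card_sq_le_card_image_mul_card_image_mul_card_image (V : Finset (α × β × γ)) :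
    #V ^ 2 ≤ #(V.image fun x => (x.1, x.2.2)) * #(V.image fun x => (x.2.2, x.2.1)) *
      #(V.image fun x => (x.1, x.2.1)) := by
  set P := V.image fun x => (x.1, x.2.1)
  have cauchy_schwarz : #V ^ 2 ≤ #P * ∑ p ∈ P, #{x ∈ V | (x.1, x.2.1) = p} ^ 2 := by
    rw [card_eq_sum_card_image (fun x => (x.1, x.2.1)) V]
    exact sq_sum_le_card_mul_sum_sq
  -- Two points with the same first two coordinates `(a, b)` are recovered from `(a, c), (c', b)`.
  have pairs_le : #{z ∈ V ×ˢ V | (z.1.1, z.1.2.1) = (z.2.1, z.2.2.1)} ≤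
      #((V.image fun x => (x.1, x.2.2)) ×ˢ (V.image fun x => (x.2.2, x.2.1))) := by
    refine card_le_card_of_injOn (fun z => ((z.1.1, z.1.2.2), (z.2.2.2, z.2.2.1))) ?_ ?_
    · intro z hz
      obtain ⟨hz, -⟩ := mem_filter.1 hz
      exact mem_product.2 ⟨mem_image_of_mem _ (mem_product.1 hz).1,
        mem_image_of_mem _ (mem_product.1 hz).2⟩
    · rintro ⟨⟨a, b, c⟩, ⟨a', b', c'⟩⟩ hz ⟨⟨d, e, k⟩, ⟨d', e', k'⟩⟩ hw heq
      simp only [mem_coe, mem_filter, mem_product, Prod.mk.injEq] at hz hw heq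
      grind
  rw [sum_card_filter_sq_eq_card_filter_product] at cauchy_schwarz
  rw [card_product] at pairs_le
  calc #V ^ 2 ≤ #P * _ := cauchy_schwarz
    _ ≤ #P * (#(V.image fun x => (x.1, x.2.2)) * #(V.image fun x => (x.2.2, x.2.1))) :=
      Nat.mul_le_mul_left _ pairs_le
    _ = _ := by ring

end LoomisWhitney

/-- Expansion bound for the direct evaluation symmetric contraction algorithm:
for a subset V of product indices (j,l,k) of nondecreasing tuples,
|V| ≤ [C(s+v,s)·C(v+t,v)·C(s+t,s)]^{1/2} · (d_A·d_B·d_C)^{1/2}, where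
d_A, d_B, d_C count the distinct merged tuples (multisets) of (j,k), (k,l),
(j,l) respectively. -/
theorem direct_eval_expansion_bound (s t v n : ℕ)
    (V : Finset ((Fin s → Fin n) × (Fin t → Fin n) × (Fin v → Fin n)))
    (hV : ∀ x ∈ V, Monotone x.1 ∧ Monotone x.2.1 ∧ Monotone x.2.2) :
    (V.card : ℝ) ≤
      Real.sqrt (((s + v).choose s * (v + t).choose v * (s + t).choose s : ℕ)) *
        Real.sqrt
          (((V.image fun x => tupleMultiset x.1 + tupleMultiset x.2.2).card *
            (V.image fun x => tupleMultiset x.2.2 + tupleMultiset x.2.1).card *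
            (V.image fun x => tupleMultiset x.1 + tupleMultiset x.2.1).card : ℕ)) := by
  have hA := card_image_le_choose_mul_card_image_merge V (fun x => x.1) (fun x => x.2.2)
    (fun x hx => (hV x hx).1) (fun x hx => (hV x hx).2.2)
  have hB := card_image_le_choose_mul_card_image_merge V (fun x => x.2.2) (fun x => x.2.1)
    (fun x hx => (hV x hx).2.2) (fun x hx => (hV x hx).2.1)
  have hC := card_image_le_choose_mul_card_image_merge V (fun x => x.1) (fun x => x.2.1)
    (fun x hx => (hV x hx).1) (fun x hx => (hV x hx).2.1)
  have key := (card_sq_le_card_image_mul_card_image_mul_card_image V).trans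
    (Nat.mul_le_mul (Nat.mul_le_mul hA hB) hC)
  rw [← Real.sqrt_mul (by positivity), Real.le_sqrt (by positivity) (by positivity)]
  exact_mod_cast key.trans_eq (by ring)
end
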